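/- arXiv:1010.4123 — 2 statements merged into one kernel-verified Lean document; each statement's English description precedes it below -/
import Mathlib

section
/- With $\tilde H=F^{-1}\circ G$ where $F$ is the $\chi^2_1$ CDF and $G$ the standard exponential CDF, the second derivative $\tilde H''$ is a positive decreasing function on $(0,\infty)$ and $\tilde H''(v)\to 0$ as $v\to\infty$. -/
/-!
Write `f = F'` and `S = 1 - F`. Since `S (H v) = e^{-v}`, the function `H` is locally inverse to
`s ↦ -log S(s)`, so `H' = φ ∘ H` for the Mills ratio `φ = S / f`. From `f'/f = -(s+1)/(2s)` one
gets `φ' = (s+1)/(2s) φ - 1`, hence `H'' = (φ φ') ∘ H`. Everything rests on the bounds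
`2s/(s+1) < φ(s) < 2(s+2)/(s+3)`, each proved by showing that the corresponding difference of
`S` and a multiple of `f` decreases strictly to `0`. The lower bound gives `φ' > 0`; both bounds
together make `(φ φ')' < 0`; the upper bound gives `φ φ' < 4/s²`. Since `H` increases to `∞`,
`H''` is positive, strictly decreasing and tends to `0`.
-/

open Filter Real Set

noncomputable def chi1CDF (y : ℝ) : ℝ :=
  ∫ t in (0:ℝ)..y, t ^ (-(1:ℝ)/2) * Real.exp (-t/2) / Real.sqrt (2 * π)

open MeasureTheory Topology

noncomputable def chi1PDF (t : ℝ) : ℝ := t ^ (-(1:ℝ)/2) * exp (-t/2) / √(2 * π)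

noncomputable def chi1Surv (s : ℝ) : ℝ := 1 - chi1CDF s

lemma chi1CDF_zero : chi1CDF 0 = 0 := intervalIntegral.integral_same

lemma chi1PDF_pos {t : ℝ} (ht : 0 < t) : 0 < chi1PDF t := by
  unfold chi1PDF
  positivity

lemma hasDerivAt_chi1PDF {t : ℝ} (ht : 0 < t) :
    HasDerivAt chi1PDF (-(t + 1) / (2 * t) * chi1PDF t) t := by
  have hpow : HasDerivAt (fun t : ℝ => t ^ (-(1:ℝ)/2)) (-(1:ℝ)/2 * t ^ (-(1:ℝ)/2 - 1)) t :=
    hasDerivAt_rpow_const (Or.inl ht.ne')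
  have hexp : HasDerivAt (fun t : ℝ => exp (-t/2)) (exp (-t/2) * (-1/2)) t :=
    (hasDerivAt_exp _).comp t ((hasDerivAt_neg t).div_const 2)
  refine ((hpow.mul hexp).div_const _).congr_deriv ?_
  rw [rpow_sub ht, rpow_one, chi1PDF]
  field_simp
  ring

lemma intervalIntegrable_chi1PDF (a b : ℝ) : IntervalIntegrable chi1PDF volume a b :=
  ((intervalIntegral.intervalIntegrable_rpow' (by norm_num)).mul_continuousOn
    (by fun_prop)).div_const _

lemma integral_chi1PDF_Ioi : ∫ t in Ioi (0:ℝ), chi1PDF t = 1 := by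
  have hval := integral_rpow_mul_exp_neg_mul_rpow (p := 1) (q := -(1:ℝ)/2) (b := 1/2)
    one_pos (by norm_num) (by norm_num)
  rw [setIntegral_congr_fun (g := fun t => t ^ (-(1:ℝ)/2) * exp (-t/2)) measurableSet_Ioi
    fun _ _ => by simp only [rpow_one]; ring_nf] at hval
  have hhalf : (1/2 : ℝ) ^ (-(-(1:ℝ)/2 + 1) / 1) = √2 := by
    rw [show -(-(1:ℝ)/2 + 1) / 1 = -(1/2) by norm_num, rpow_neg (by norm_num), one_div,
      inv_rpow (by norm_num), inv_inv, sqrt_eq_rpow, one_div]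
  rw [hhalf, show (-(1:ℝ)/2 + 1) / 1 = 1/2 by norm_num, Gamma_one_half_eq, div_one, mul_one,
    ← sqrt_mul zero_le_two] at hval
  unfold chi1PDF
  rw [integral_div, hval, div_self (by positivity)]

lemma integrableOn_chi1PDF_Ioi : IntegrableOn chi1PDF (Ioi 0) :=
  Integrable.of_integral_ne_zero (by rw [integral_chi1PDF_Ioi]; exact one_ne_zero)

lemma hasDerivAt_chi1CDF {s : ℝ} (hs : 0 < s) : HasDerivAt chi1CDF (chi1PDF s) s :=
  have hcont : ContinuousOn chi1PDF (Ioi 0) := fun _ ht =>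
    (hasDerivAt_chi1PDF ht).continuousAt.continuousWithinAt
  intervalIntegral.integral_hasDerivAt_right (intervalIntegrable_chi1PDF 0 s)
    (hcont.stronglyMeasurableAtFilter isOpen_Ioi s hs) (hcont.continuousAt (Ioi_mem_nhds hs))

lemma chi1CDF_strictMonoOn : StrictMonoOn chi1CDF (Ici 0) := by
  refine strictMonoOn_of_deriv_pos (convex_Ici 0)
    (intervalIntegral.continuous_primitive intervalIntegrable_chi1PDF 0).continuousOn ?_
  rw [interior_Ici]
  intro s hs
  rw [(hasDerivAt_chi1CDF hs).deriv]
  exact chi1PDF_pos hs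

lemma chi1Surv_lt_one {s : ℝ} (hs : 0 < s) : chi1Surv s < 1 := by
  have h := chi1CDF_strictMonoOn (mem_Ici.2 le_rfl) (mem_Ici.2 hs.le) hs
  rw [chi1CDF_zero] at h
  rw [chi1Surv]
  linarith

lemma hasDerivAt_chi1Surv {s : ℝ} (hs : 0 < s) : HasDerivAt chi1Surv (-chi1PDF s) s := by
  exact (hasDerivAt_chi1CDF hs).const_sub 1

lemma tendsto_chi1Surv_atTop : Tendsto chi1Surv atTop (𝓝 0) := by
  have h := intervalIntegral_tendsto_integral_Ioi 0 integrableOn_chi1PDF_Ioi tendsto_id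
  rw [integral_chi1PDF_Ioi] at h
  rw [← sub_self 1]
  exact h.const_sub 1

lemma tendsto_chi1PDF_atTop : Tendsto chi1PDF atTop (𝓝 0) := by
  have hpow : Tendsto (fun t : ℝ => t ^ (-(1:ℝ)/2)) atTop (𝓝 0) := by
    simpa only [neg_div] using tendsto_rpow_neg_atTop (by norm_num : (0:ℝ) < 1/2)
  have hexp : Tendsto (fun t : ℝ => exp (-t/2)) atTop (𝓝 0) :=
    tendsto_exp_neg_atTop_nhds_zero.comp (tendsto_id.atTop_div_const two_pos) |>.congr
      fun _ => by simp [neg_div]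
  have h := (hpow.mul hexp).div_const (√(2 * π))
  rwa [zero_mul, zero_div] at h

lemma tendsto_mul_chi1PDF_atTop {w : ℝ → ℝ} {C : ℝ} (hw : ∀ᶠ x in atTop, ‖w x‖ ≤ C) :
    Tendsto (fun x => w x * chi1PDF x) atTop (𝓝 0) :=
  isBoundedUnder_le_mul_tendsto_zero ⟨C, hw⟩ tendsto_chi1PDF_atTop

lemma strictAntiOn_Ioi_of_hasDerivAt_neg {f f' : ℝ → ℝ} {a : ℝ}
    (hf : ∀ x ∈ Ioi a, HasDerivAt f (f' x) x) (hf' : ∀ x ∈ Ioi a, f' x < 0) :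
    StrictAntiOn f (Ioi a) := by
  refine strictAntiOn_of_hasDerivWithinAt_neg (f' := f') (convex_Ioi a)
    (fun x hx => (hf x hx).continuousAt.continuousWithinAt) ?_ ?_ <;> rw [interior_Ioi]
  · exact fun x hx => (hf x hx).hasDerivWithinAt
  · exact hf'

lemma pos_of_hasDerivAt_neg_of_tendsto_zero {f f' : ℝ → ℝ} {a : ℝ}
    (hf : ∀ x ∈ Ioi a, HasDerivAt f (f' x) x) (hf' : ∀ x ∈ Ioi a, f' x < 0)
    (hlim : Tendsto f atTop (𝓝 0)) {x : ℝ} (hx : a < x) : 0 < f x := by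
  have hanti := strictAntiOn_Ioi_of_hasDerivAt_neg hf hf'
  have hx1 : a < x + 1 := by linarith
  have hnonneg : 0 ≤ f (x + 1) :=
    le_of_tendsto hlim <| (eventually_gt_atTop (x + 1)).mono fun y hy =>
      (hanti hx1 (hx1.trans hy) hy).le
  linarith [hanti hx hx1 (lt_add_one x)]

lemma mul_chi1PDF_lt_chi1Surv {s : ℝ} (hs : 0 < s) :
    2 * s / (s + 1) * chi1PDF s < chi1Surv s := by
  suffices 0 < chi1Surv s - 2 * s / (s + 1) * chi1PDF s by linarith
  refine pos_of_hasDerivAt_neg_of_tendsto_zero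
    (f := fun x => chi1Surv x - 2 * x / (x + 1) * chi1PDF x)
    (f' := fun x => -(2 / (x + 1) ^ 2 * chi1PDF x))
    (fun x (hx : 0 < x) => ?_) (fun x (hx : 0 < x) => ?_) ?_ hs
  · have hw : HasDerivAt (fun x : ℝ => 2 * x / (x + 1)) (2 / (x + 1) ^ 2) x := by
      refine (((hasDerivAt_id' x).const_mul 2).div ((hasDerivAt_id' x).add_const 1)
        (by positivity : x + 1 ≠ 0)).congr_deriv ?_
      field_simp
      ring
    refine ((hasDerivAt_chi1Surv hx).sub (hw.mul (hasDerivAt_chi1PDF hx))).congr_deriv ?_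
    have : x ≠ 0 := hx.ne'
    field_simp
    ring
  · have := chi1PDF_pos hx
    simp only [neg_lt_zero]
    positivity
  · simpa using tendsto_chi1Surv_atTop.sub <| tendsto_mul_chi1PDF_atTop (C := 2) <|
      (eventually_gt_atTop 0).mono fun x hx => by
        rw [norm_of_nonneg (by positivity), div_le_iff₀ (by positivity)]
        linarith

lemma chi1Surv_lt_mul_chi1PDF {s : ℝ} (hs : 0 < s) :
    chi1Surv s < 2 * (s + 2) / (s + 3) * chi1PDF s := by
  suffices 0 < 2 * (s + 2) / (s + 3) * chi1PDF s - chi1Surv s by linarith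
  refine pos_of_hasDerivAt_neg_of_tendsto_zero
    (f := fun x => 2 * (x + 2) / (x + 3) * chi1PDF x - chi1Surv x)
    (f' := fun x => -(6 / (x * (x + 3) ^ 2) * chi1PDF x))
    (fun x (hx : 0 < x) => ?_) (fun x (hx : 0 < x) => ?_) ?_ hs
  · have hw : HasDerivAt (fun x : ℝ => 2 * (x + 2) / (x + 3)) (2 / (x + 3) ^ 2) x := by
      refine ((((hasDerivAt_id' x).add_const 2).const_mul 2).div
        ((hasDerivAt_id' x).add_const 3) (by positivity : x + 3 ≠ 0)).congr_deriv ?_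
      field_simp
      ring
    refine ((hw.mul (hasDerivAt_chi1PDF hx)).sub (hasDerivAt_chi1Surv hx)).congr_deriv ?_
    have : x ≠ 0 := hx.ne'
    field_simp
    ring
  · have := chi1PDF_pos hx
    simp only [neg_lt_zero]
    positivity
  · simpa using (tendsto_mul_chi1PDF_atTop (C := 2) <|
      (eventually_gt_atTop 0).mono fun x hx => by
        rw [norm_of_nonneg (by positivity), div_le_iff₀ (by positivity)]
        linarith).sub tendsto_chi1Surv_atTop

lemma chi1Surv_pos {s : ℝ} (hs : 0 < s) : 0 < chi1Surv s :=
  lt_trans (by have := chi1PDF_pos hs; positivity) (mul_chi1PDF_lt_chi1Surv hs)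

noncomputable def chi1Mills (s : ℝ) : ℝ := chi1Surv s / chi1PDF s

noncomputable def chi1MillsDeriv (s : ℝ) : ℝ := (s + 1) / (2 * s) * chi1Mills s - 1

lemma lt_chi1Mills {s : ℝ} (hs : 0 < s) : 2 * s / (s + 1) < chi1Mills s :=
  (lt_div_iff₀ (chi1PDF_pos hs)).2 (mul_chi1PDF_lt_chi1Surv hs)

lemma chi1Mills_lt {s : ℝ} (hs : 0 < s) : chi1Mills s < 2 * (s + 2) / (s + 3) :=
  (div_lt_iff₀ (chi1PDF_pos hs)).2 (chi1Surv_lt_mul_chi1PDF hs)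

lemma chi1Mills_pos {s : ℝ} (hs : 0 < s) : 0 < chi1Mills s :=
  div_pos (chi1Surv_pos hs) (chi1PDF_pos hs)

lemma chi1MillsDeriv_pos {s : ℝ} (hs : 0 < s) : 0 < chi1MillsDeriv s := by
  have h := lt_chi1Mills hs
  rw [div_lt_iff₀ (by positivity)] at h
  rw [chi1MillsDeriv, sub_pos, div_mul_eq_mul_div, one_lt_div (by positivity)]
  linarith

lemma hasDerivAt_chi1Mills {s : ℝ} (hs : 0 < s) : HasDerivAt chi1Mills (chi1MillsDeriv s) s := by
  refine ((hasDerivAt_chi1Surv hs).div (hasDerivAt_chi1PDF hs) (chi1PDF_pos hs).ne').congr_deriv ?_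
  have := (chi1PDF_pos hs).ne'
  rw [chi1MillsDeriv, chi1Mills]
  field_simp
  ring

lemma hasDerivAt_chi1MillsDeriv {s : ℝ} (hs : 0 < s) :
    HasDerivAt chi1MillsDeriv
      ((s + 1) / (2 * s) * chi1MillsDeriv s - chi1Mills s / (2 * s ^ 2)) s := by
  have hcoef : HasDerivAt (fun s : ℝ => (s + 1) / (2 * s)) (-1 / (2 * s ^ 2)) s := by
    refine (((hasDerivAt_id' s).add_const 1).div ((hasDerivAt_id' s).const_mul 2)
      (by positivity)).congr_deriv ?_
    field_simp
    ring
  refine ((hcoef.mul (hasDerivAt_chi1Mills hs)).sub_const 1).congr_deriv ?_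
  ring

lemma chi1Mills_mul_deriv_pos {s : ℝ} (hs : 0 < s) : 0 < (chi1Mills * chi1MillsDeriv) s :=
  mul_pos (chi1Mills_pos hs) (chi1MillsDeriv_pos hs)

lemma chi1Mills_mul_deriv_strictAntiOn : StrictAntiOn (chi1Mills * chi1MillsDeriv) (Ioi 0) := by
  refine strictAntiOn_Ioi_of_hasDerivAt_neg
    (fun s (hs : 0 < s) => (hasDerivAt_chi1Mills hs).mul (hasDerivAt_chi1MillsDeriv hs))
    fun s (hs : 0 < s) => ?_
  set p := chi1Mills s
  have hlo : 2 * s < p * (s + 1) := (div_lt_iff₀ (by positivity)).1 (lt_chi1Mills hs)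
  have hhi : p * (s + 3) < 2 * (s + 2) := (lt_div_iff₀ (by positivity)).1 (chi1Mills_lt hs)
  -- the quadratic is convex in `p` and negative at both ends of the Mills-ratio bounds
  have hquad : (s + 2) * p ^ 2 - 3 * (s + 1) * p + 2 * s < 0 := by
    nlinarith [mul_pos (sub_pos.2 hlo) (sub_pos.2 hhi), sq_nonneg p, sq_nonneg (p - 2),
      mul_pos hs hs]
  have hderiv : chi1MillsDeriv s * chi1MillsDeriv s + p * ((s + 1) / (2 * s) * chi1MillsDeriv s
      - p / (2 * s ^ 2)) = ((s + 2) * p ^ 2 - 3 * (s + 1) * p + 2 * s) / (2 * s) := by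
    rw [chi1MillsDeriv]
    field_simp
    ring
  rw [hderiv]
  exact div_neg_of_neg_of_pos hquad (by positivity)

lemma chi1Mills_mul_deriv_lt {s : ℝ} (hs : 0 < s) :
    (chi1Mills * chi1MillsDeriv) s < 4 / s ^ 2 := by
  have hp := chi1Mills_pos hs
  have hhi : chi1Mills s * (s + 3) < 2 * (s + 2) :=
    (lt_div_iff₀ (by positivity)).1 (chi1Mills_lt hs)
  have hd : chi1MillsDeriv s < 2 / (s * (s + 3)) := by
    have hgap : 2 / (s * (s + 3)) - chi1MillsDeriv s
        = (2 * (s + 2) - chi1Mills s * (s + 3)) * (s + 1) / (2 * s * (s + 3)) := by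
      rw [chi1MillsDeriv]
      field_simp
      ring
    have : 0 < (2 * (s + 2) - chi1Mills s * (s + 3)) * (s + 1) / (2 * s * (s + 3)) :=
      div_pos (mul_pos (sub_pos.2 hhi) (by positivity)) (by positivity)
    linarith
  calc chi1Mills s * chi1MillsDeriv s < 2 * (2 / (s * (s + 3))) := by
        refine mul_lt_mul'' (by nlinarith) hd hp.le (chi1MillsDeriv_pos hs).le
    _ ≤ 4 / s ^ 2 := by
        rw [← mul_div_assoc, div_le_div_iff₀ (by positivity) (by positivity)]
        nlinarith

section Quantile

variable {H : ℝ → ℝ} (hH : ∀ v ∈ Ioi (0:ℝ), 0 < H v ∧ chi1CDF (H v) = 1 - exp (-v))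
include hH

lemma chi1Surv_comp_eq {v : ℝ} (hv : 0 < v) : chi1Surv (H v) = exp (-v) := by
  rw [chi1Surv, (hH v hv).2, sub_sub_cancel]

lemma strictMonoOn_of_chi1CDF_comp : StrictMonoOn H (Ioi 0) := fun v hv w hw hvw => by
  rw [← chi1CDF_strictMonoOn.lt_iff_lt (mem_Ici.2 (hH v hv).1.le) (mem_Ici.2 (hH w hw).1.le),
    (hH v hv).2, (hH w hw).2]
  simpa using hvw

lemma image_Ioi_of_chi1CDF_comp : H '' Ioi 0 = Ioi 0 := by
  refine subset_antisymm (image_subset_iff.2 fun v hv => (hH v hv).1) fun s (hs : 0 < s) => ?_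
  have hv : 0 < -log (chi1Surv s) := neg_pos.2 (log_neg (chi1Surv_pos hs) (chi1Surv_lt_one hs))
  refine ⟨_, hv, chi1CDF_strictMonoOn.injOn (mem_Ici.2 (hH _ hv).1.le) (mem_Ici.2 hs.le) ?_⟩
  rw [(hH _ hv).2, neg_neg, exp_log (chi1Surv_pos hs), chi1Surv, sub_sub_cancel]

lemma continuousAt_of_chi1CDF_comp {v : ℝ} (hv : 0 < v) : ContinuousAt H v :=
  continuousAt_of_monotoneOn_of_image_mem_nhds (strictMonoOn_of_chi1CDF_comp hH).monotoneOn
    (Ioi_mem_nhds hv) (by rw [image_Ioi_of_chi1CDF_comp hH]; exact Ioi_mem_nhds (hH v hv).1)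

lemma tendsto_atTop_of_chi1CDF_comp : Tendsto H atTop atTop := by
  refine tendsto_atTop_atTop.2 fun b => ?_
  obtain ⟨v, hv, hHv⟩ := (image_Ioi_of_chi1CDF_comp hH).ge (mem_Ioi.2 (lt_max_of_lt_right one_pos))
  refine ⟨v, fun w hvw => (le_max_left b 1).trans ?_⟩
  rw [← hHv]
  exact (strictMonoOn_of_chi1CDF_comp hH).monotoneOn hv (lt_of_lt_of_le hv hvw) hvw

lemma hasDerivAt_of_chi1CDF_comp {v : ℝ} (hv : 0 < v) :
    HasDerivAt H (chi1Mills (H v)) v := by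
  have hs := (hH v hv).1
  have hinv : HasDerivAt (fun s => -log (chi1Surv s)) (chi1PDF (H v) / chi1Surv (H v)) (H v) := by
    refine ((hasDerivAt_chi1Surv hs).log (chi1Surv_pos hs).ne').neg.congr_deriv ?_
    ring
  have hleft : ∀ᶠ w in 𝓝 v, -log (chi1Surv (H w)) = w :=
    eventually_of_mem (Ioi_mem_nhds hv) fun w hw => by rw [chi1Surv_comp_eq hH hw, log_exp, neg_neg]
  have h := hinv.of_local_left_inverse (continuousAt_of_chi1CDF_comp hH hv)
    (div_pos (chi1PDF_pos hs) (chi1Surv_pos hs)).ne' hleft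
  rwa [inv_div] at h

lemma hasDerivAt_deriv_of_chi1CDF_comp {v : ℝ} (hv : 0 < v) :
    HasDerivAt (deriv H) ((chi1Mills * chi1MillsDeriv) (H v)) v := by
  have hs := (hH v hv).1
  have hcomp := (hasDerivAt_chi1Mills hs).comp v (hasDerivAt_of_chi1CDF_comp hH hv)
  refine (hcomp.congr_of_eventuallyEq ?_).congr_deriv (mul_comm _ _)
  exact eventually_of_mem (Ioi_mem_nhds hv) fun w hw => (hasDerivAt_of_chi1CDF_comp hH hw).deriv

end Quantile

/-- With `H̃ = F⁻¹ ∘ G` (`F` the χ²₁ CDF, `G` standard exponential CDF), the second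
derivative `H̃''` is positive and (strictly) decreasing on `(0,∞)`, and `H̃''(v) → 0`
as `v → ∞`. -/
theorem tildeH_second_deriv_properties (H : ℝ → ℝ)
    (hH : ∀ v ∈ Set.Ioi (0:ℝ), 0 < H v ∧ chi1CDF (H v) = 1 - Real.exp (-v)) :
    (∀ v ∈ Set.Ioi (0:ℝ), 0 < deriv (deriv H) v) ∧
    StrictAntiOn (deriv (deriv H)) (Set.Ioi 0) ∧
    Tendsto (deriv (deriv H)) atTop (nhds 0) := by
  have hH'' : EqOn (deriv (deriv H)) ((chi1Mills * chi1MillsDeriv) ∘ H) (Ioi 0) :=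
    fun v hv => (hasDerivAt_deriv_of_chi1CDF_comp hH hv).deriv
  have hpos : ∀ v ∈ Ioi (0:ℝ), H v ∈ Ioi 0 := fun v hv => (hH v hv).1
  refine ⟨fun v hv => ?_, fun v hv w hw hvw => ?_, ?_⟩
  · rw [hH'' hv]
    exact chi1Mills_mul_deriv_pos (hpos v hv)
  · rw [hH'' hv, hH'' hw]
    exact chi1Mills_mul_deriv_strictAntiOn (hpos v hv) (hpos w hw)
      (strictMonoOn_of_chi1CDF_comp hH hv hw hvw)
  · have hHtop := tendsto_atTop_of_chi1CDF_comp hH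
    have hbound : Tendsto (fun s : ℝ => 4 / s ^ 2) atTop (𝓝 0) :=
      tendsto_const_nhds.div_atTop (tendsto_pow_atTop two_ne_zero)
    refine squeeze_zero' ?_ ?_ (hbound.comp hHtop)
    all_goals filter_upwards [eventually_gt_atTop 0] with v hv
    · rw [hH'' hv]
      exact (chi1Mills_mul_deriv_pos (hpos v hv)).le
    · rw [hH'' hv]
      exact (chi1Mills_mul_deriv_lt (hpos v hv)).le
end

section
/- With $\tilde H=F^{-1}\circ G$ where $F$ is the $\chi^2_1$ CDF and $G$ the standard exponential CDF, one has $\frac{\tilde H'''(v)}{\tilde H''(v)}(1-e^{-v})\to 0$ as $v\to 0^+$, and $\frac{\tilde H'''(v)}{\tilde H''(v)}\to 0$ as $v\to\infty$. -/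
/-!
Write `g = √H̃` and let `Z` be standard normal. Since `χ²₁` is the law of `Z²`, the equation
`F (H̃ v) = 1 - e^{-v}` says `P(|Z| > g v) = e^{-v}`, so `g` inverts the cumulative hazard
`x ↦ -log P(|Z| > x)`, whose derivative is the reciprocal of the Mills ratio `ψ`. Hence
`g' = ψ ∘ g`, and as `ψ' = x ψ - 1`, every derivative of `H̃ = g²` is a polynomial in `g` and
`ψ ∘ g`. As `v → 0⁺`, `g → 0` and `H̃''` tends to `2 ψ(0)² ≠ 0`, so `H̃'''/H̃''` stays bounded.
As `v → ∞`, `g → ∞`, and the Mills bounds `1 - a + 3a² - 15a³ ≤ x ψ(x) ≤ 1 - a + 3a²`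
(`a = x⁻²`) give `|H̃'''/H̃''| ≤ 10 / g²`.
-/

open Filter Real Set

open MeasureTheory Topology

lemma nonneg_of_hasDerivAt_nonpos_of_tendsto_zero {f f' : ℝ → ℝ} {a : ℝ}
    (hf : ∀ x ∈ Ioi a, HasDerivAt f (f' x) x) (hf' : ∀ x ∈ Ioi a, f' x ≤ 0)
    (hlim : Tendsto f atTop (𝓝 0)) {x : ℝ} (hx : x ∈ Ioi a) : 0 ≤ f x := by
  have hanti : AntitoneOn f (Ioi a) :=
    antitoneOn_of_hasDerivWithinAt_nonpos (f' := f') (convex_Ioi a)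
      (fun y hy => (hf y hy).continuousAt.continuousWithinAt)
      (fun y hy => by rw [interior_Ioi] at hy ⊢; exact (hf y hy).hasDerivWithinAt)
      (by rwa [interior_Ioi])
  refine le_of_tendsto hlim ?_
  filter_upwards [eventually_ge_atTop x] with y hxy
  exact hanti hx (lt_of_lt_of_le hx hxy) hxy

lemma eqOn_deriv_of_eqOn_comp {F g g' φ φ' : ℝ → ℝ} {U : Set ℝ} (hU : IsOpen U)
    (hg : ∀ v ∈ U, HasDerivAt g (g' v) v) (hφ : ∀ x, HasDerivAt φ (φ' x) x)
    (hF : EqOn F (φ ∘ g) U) : EqOn (deriv F) (fun v => φ' (g v) * g' v) U := fun v hv => by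
  rw [(hF.eventuallyEq_of_mem (hU.mem_nhds hv)).deriv_eq]
  exact ((hφ (g v)).comp v (hg v hv)).deriv

theorem StrictMono.tendsto_nhds_of_eventually_apply_eq {α β : Type*} [LinearOrder α]
    [TopologicalSpace α] [OrderTopology α] [LinearOrder β] [TopologicalSpace β] [OrderTopology β]
    {J : α → β} (hJ : StrictMono J) {g : β → α} {l : Filter β} {x : α} (hl : l ≤ 𝓝 (J x))
    (hg : ∀ᶠ w in l, J (g w) = w) : Tendsto g l (𝓝 x) := by
  refine tendsto_order.2 ⟨fun b hb => ?_, fun b hb => ?_⟩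
  · filter_upwards [hg, hl (Ioi_mem_nhds (hJ hb))] with w hw hwb
    exact hJ.lt_iff_lt.1 (hw.symm ▸ hwb)
  · filter_upwards [hg, hl (Iio_mem_nhds (hJ hb))] with w hw hwb
    exact hJ.lt_iff_lt.1 (hw.symm ▸ hwb)

theorem StrictMono.tendsto_atTop_of_eventually_apply_eq {α β : Type*} [LinearOrder α]
    [Preorder β] [NoMaxOrder β] {J : α → β} (hJ : StrictMono J) {g : β → α}
    (hg : ∀ᶠ w in atTop, J (g w) = w) : Tendsto g atTop atTop :=
  Filter.tendsto_atTop.2 fun b => by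
    filter_upwards [hg, eventually_gt_atTop (J b)] with w hw hwb
    exact (hJ.lt_iff_lt.1 (hw.symm ▸ hwb)).le

lemma sqrt_two_div_pi_mul_sqrt_pi_div_two : √(2 / π) * √(π / 2) = 1 := by
  rw [← sqrt_mul (by positivity), div_mul_div_comm, mul_comm 2 π, div_self (by positivity),
    sqrt_one]

lemma continuous_exp_neg_sq_div_two : Continuous fun s : ℝ => exp (-s ^ 2 / 2) := by
  fun_prop

lemma hasDerivAt_exp_neg_sq_div_two (x : ℝ) :
    HasDerivAt (fun x => exp (-x ^ 2 / 2)) (-x * exp (-x ^ 2 / 2)) x := by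
  refine (((hasDerivAt_pow 2 x).fun_neg.div_const 2).exp).congr_deriv ?_
  simp only [Nat.cast_ofNat]; ring

lemma tendsto_exp_neg_sq_div_two_atTop : Tendsto (fun x : ℝ => exp (-x ^ 2 / 2)) atTop (𝓝 0) :=
  tendsto_exp_atBot.comp <|
    (tendsto_neg_atTop_atBot.comp (tendsto_pow_atTop two_ne_zero)).atBot_div_const two_pos

noncomputable def gaussTail (x : ℝ) : ℝ := √(π / 2) - ∫ s in (0:ℝ)..x, exp (-s ^ 2 / 2)

lemma hasDerivAt_gaussTail (x : ℝ) : HasDerivAt gaussTail (-exp (-x ^ 2 / 2)) x :=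
  (intervalIntegral.integral_hasDerivAt_right
    (continuous_exp_neg_sq_div_two.intervalIntegrable 0 x)
    (continuous_exp_neg_sq_div_two.stronglyMeasurableAtFilter _ _)
    continuous_exp_neg_sq_div_two.continuousAt).const_sub _

lemma tendsto_gaussTail_atTop : Tendsto gaussTail atTop (𝓝 0) := by
  have hform : (fun s : ℝ => exp (-s ^ 2 / 2)) = fun s => exp (-(1 / 2) * s ^ 2) := by
    ext s; ring_nf
  have hint : IntegrableOn (fun s : ℝ => exp (-s ^ 2 / 2)) (Ioi 0) := by
    rw [hform]; exact integrableOn_Ioi_exp_neg_mul_sq_iff.2 (by norm_num)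
  have hval : ∫ s in Ioi (0:ℝ), exp (-s ^ 2 / 2) = √(π / 2) := by
    rw [hform, integral_gaussian_Ioi, show π / (1 / 2) = 2 ^ 2 * (π / 2) by ring,
      sqrt_mul (by positivity), sqrt_sq zero_le_two]
    ring
  have := (intervalIntegral_tendsto_integral_Ioi 0 hint tendsto_id).const_sub (√(π / 2))
  rwa [hval, sub_self] at this

lemma gaussTail_pos (x : ℝ) : 0 < gaussTail x := by
  have hanti : StrictAnti gaussTail :=
    strictAnti_of_hasDerivAt_neg hasDerivAt_gaussTail fun x => neg_neg_of_pos (exp_pos _)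
  exact lt_of_le_of_lt (hanti.antitone.le_of_tendsto tendsto_gaussTail_atTop (x + 1))
    (hanti (lt_add_one x))

lemma chi1CDF_eq_integral_exp {y : ℝ} (hy : 0 ≤ y) :
    chi1CDF y = √(2 / π) * ∫ s in (0:ℝ)..√y, exp (-s ^ 2 / 2) := by
  have himage : (fun s : ℝ => s ^ 2) '' Ioc 0 √y = Ioc 0 y := by
    ext t
    constructor
    · rintro ⟨s, ⟨hs, hsy⟩, rfl⟩
      exact ⟨by positivity, ((sq_le_sq₀ hs.le (sqrt_nonneg y)).2 hsy).trans_eq (sq_sqrt hy)⟩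
    · rintro ⟨ht, hty⟩
      exact ⟨√t, ⟨sqrt_pos.2 ht, sqrt_le_sqrt hty⟩, sq_sqrt ht.le⟩
  have hinj : InjOn (fun s : ℝ => s ^ 2) (Ioc 0 √y) :=
    (pow_left_strictMonoOn₀ two_ne_zero).injOn.mono (Ioc_subset_Ioi_self.trans Ioi_subset_Ici_self)
  rw [chi1CDF, intervalIntegral.integral_of_le hy, intervalIntegral.integral_of_le (sqrt_nonneg y),
    ← himage, integral_image_eq_integral_abs_deriv_smul measurableSet_Ioc (f' := fun s => 2 * s)
      (fun s _ => ((hasDerivAt_pow 2 s).congr_deriv (by ring)).hasDerivWithinAt) hinj,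
    ← integral_const_mul]
  refine setIntegral_congr_fun measurableSet_Ioc fun s hs => ?_
  have hs : 0 < s := hs.1
  have hrpow : (s ^ 2) ^ (-(1:ℝ) / 2) = s⁻¹ := by
    rw [neg_div, rpow_neg (by positivity), ← sqrt_eq_rpow, sqrt_sq hs.le]
  have hconst : √(2 / π) = 2 / √(2 * π) := by
    rw [sqrt_div' _ pi_pos.le, sqrt_mul zero_le_two, div_mul_eq_div_div, div_sqrt]
  rw [smul_eq_mul, hrpow, hconst, abs_of_pos (by positivity : (0:ℝ) < 2 * s)]
  field_simp

noncomputable def millsRatio (x : ℝ) : ℝ := gaussTail x / exp (-x ^ 2 / 2)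

lemma millsRatio_pos (x : ℝ) : 0 < millsRatio x := div_pos (gaussTail_pos x) (exp_pos _)

lemma hasDerivAt_millsRatio (x : ℝ) : HasDerivAt millsRatio (x * millsRatio x - 1) x := by
  refine ((hasDerivAt_gaussTail x).div (hasDerivAt_exp_neg_sq_div_two x)
    (exp_pos _).ne').congr_deriv ?_
  unfold millsRatio
  field_simp
  ring

lemma continuous_millsRatio : Continuous millsRatio :=
  continuous_iff_continuousAt.2 fun x => (hasDerivAt_millsRatio x).continuousAt

lemma hasDerivAt_exp_mul_sub_gaussTail {q : ℝ → ℝ} {q' x : ℝ} (hq : HasDerivAt q q' x) :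
    HasDerivAt (fun x => exp (-x ^ 2 / 2) * q x - gaussTail x)
      (exp (-x ^ 2 / 2) * (q' - x * q x + 1)) x := by
  refine (((hasDerivAt_exp_neg_sq_div_two x).mul hq).sub (hasDerivAt_gaussTail x)).congr_deriv ?_
  ring

lemma tendsto_exp_mul_sub_gaussTail {q : ℝ → ℝ} (hq : Tendsto q atTop (𝓝 0)) :
    Tendsto (fun x => exp (-x ^ 2 / 2) * q x - gaussTail x) atTop (𝓝 0) := by
  simpa using (tendsto_exp_neg_sq_div_two_atTop.mul hq).sub tendsto_gaussTail_atTop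

lemma millsRatio_le_of_hasDerivAt {q q' : ℝ → ℝ} (hq : ∀ x ∈ Ioi 0, HasDerivAt q (q' x) x)
    (hq' : ∀ x ∈ Ioi 0, q' x - x * q x + 1 ≤ 0) (hlim : Tendsto q atTop (𝓝 0)) {x : ℝ}
    (hx : 0 < x) : millsRatio x ≤ q x := by
  have := nonneg_of_hasDerivAt_nonpos_of_tendsto_zero
    (fun x hx => hasDerivAt_exp_mul_sub_gaussTail (hq x hx))
    (fun x hx => mul_nonpos_of_nonneg_of_nonpos (exp_pos _).le (hq' x hx))
    (tendsto_exp_mul_sub_gaussTail hlim) hx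
  rw [millsRatio, div_le_iff₀ (exp_pos _)]
  linarith

lemma le_millsRatio_of_hasDerivAt {q q' : ℝ → ℝ} (hq : ∀ x ∈ Ioi 0, HasDerivAt q (q' x) x)
    (hq' : ∀ x ∈ Ioi 0, 0 ≤ q' x - x * q x + 1) (hlim : Tendsto q atTop (𝓝 0)) {x : ℝ}
    (hx : 0 < x) : q x ≤ millsRatio x := by
  have := nonneg_of_hasDerivAt_nonpos_of_tendsto_zero
    (fun x hx => (hasDerivAt_exp_mul_sub_gaussTail (hq x hx)).fun_neg)
    (fun x hx => neg_nonpos.2 (mul_nonneg (exp_pos _).le (hq' x hx)))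
    (by simpa using (tendsto_exp_mul_sub_gaussTail hlim).neg) hx
  rw [millsRatio, le_div_iff₀ (exp_pos _)]
  linarith

/-- Truncations of the asymptotic series `x⁻¹ - x⁻³ + 3x⁻⁵ - 15x⁻⁷ + ⋯` of the Mills ratio;
`c = 0` and `c = 15` bracket it. -/
noncomputable def millsApprox (c x : ℝ) : ℝ := x⁻¹ - x⁻¹ ^ 3 + 3 * x⁻¹ ^ 5 - c * x⁻¹ ^ 7

lemma hasDerivAt_millsApprox (c : ℝ) {x : ℝ} (hx : x ≠ 0) :
    HasDerivAt (millsApprox c)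
      (-x⁻¹ ^ 2 * (1 - 3 * x⁻¹ ^ 2 + 15 * x⁻¹ ^ 4 - 7 * c * x⁻¹ ^ 6)) x := by
  have hP : HasDerivAt (fun y : ℝ => y - y ^ 3 + 3 * y ^ 5 - c * y ^ 7)
      (1 - 3 * x⁻¹ ^ 2 + 15 * x⁻¹ ^ 4 - 7 * c * x⁻¹ ^ 6) x⁻¹ := by
    refine ((((hasDerivAt_id _).fun_sub (hasDerivAt_pow 3 _)).fun_add
      ((hasDerivAt_pow 5 _).const_mul 3)).fun_sub ((hasDerivAt_pow 7 _).const_mul c)).congr_deriv ?_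
    simp only [Nat.cast_ofNat]; ring
  refine (hP.comp x (hasDerivAt_inv hx)).congr_deriv ?_
  rw [inv_pow]; ring

lemma mul_millsApprox (c : ℝ) {x : ℝ} (hx : x ≠ 0) :
    x * millsApprox c x = 1 - x⁻¹ ^ 2 + 3 * (x⁻¹ ^ 2) ^ 2 - c * (x⁻¹ ^ 2) ^ 3 := by
  rw [millsApprox]; field_simp

lemma millsApprox_deriv_sub_mul_add_one (c : ℝ) {x : ℝ} (hx : x ≠ 0) :
    -x⁻¹ ^ 2 * (1 - 3 * x⁻¹ ^ 2 + 15 * x⁻¹ ^ 4 - 7 * c * x⁻¹ ^ 6) - x * millsApprox c x + 1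
      = x⁻¹ ^ 6 * (c - 15 + 7 * c * x⁻¹ ^ 2) := by
  rw [mul_millsApprox c hx]; ring

lemma tendsto_millsApprox (c : ℝ) : Tendsto (millsApprox c) atTop (𝓝 0) := by
  have hP : Continuous fun y : ℝ => y - y ^ 3 + 3 * y ^ 5 - c * y ^ 7 := by fun_prop
  have h := (hP.tendsto 0).comp tendsto_inv_atTop_zero
  rwa [show (0:ℝ) - 0 ^ 3 + 3 * 0 ^ 5 - c * 0 ^ 7 = 0 by ring] at h

lemma millsRatio_le_millsApprox {x : ℝ} (hx : 0 < x) : millsRatio x ≤ millsApprox 0 x := by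
  refine millsRatio_le_of_hasDerivAt (fun x hx => hasDerivAt_millsApprox 0 (ne_of_gt hx))
    (fun x hx => ?_) (tendsto_millsApprox 0) hx
  rw [millsApprox_deriv_sub_mul_add_one 0 (ne_of_gt hx)]
  nlinarith [pow_pos (inv_pos.2 (mem_Ioi.1 hx)) 6]

lemma millsApprox_le_millsRatio {x : ℝ} (hx : 0 < x) : millsApprox 15 x ≤ millsRatio x := by
  refine le_millsRatio_of_hasDerivAt (fun x hx => hasDerivAt_millsApprox 15 (ne_of_gt hx))
    (fun x hx => ?_) (tendsto_millsApprox 15) hx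
  rw [millsApprox_deriv_sub_mul_add_one 15 (ne_of_gt hx)]
  have := inv_pos.2 (mem_Ioi.1 hx)
  positivity

/-- With `a = x⁻²` and `u = x * millsRatio x` the quotient is `H̃'''/H̃''` at `x = √H̃`. Only
once `u` is known to within `O(a³)` is the denominator `≈ 2a²` and the numerator `O(a³)`. -/
lemma abs_div_le_of_mills_bounds {a u : ℝ} (ha : 0 < a) (ha' : a ≤ 1 / 16)
    (hlo : 1 - a + 3 * a ^ 2 - 15 * a ^ 3 ≤ u) (hhi : u ≤ 1 - a + 3 * a ^ 2) :
    |(2 * (1 + 2 * a) * u ^ 2 - 3 * (1 + a) * u + 1) / ((1 + a) * u - 1)| ≤ 10 * a := by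
  obtain ⟨t, ht, ht', rfl⟩ : ∃ t, 0 ≤ t ∧ t ≤ 15 * a ^ 3 ∧ u = 1 - a + 3 * a ^ 2 - t :=
    ⟨1 - a + 3 * a ^ 2 - u, by linarith, by linarith, by ring⟩
  rw [show (1 + a) * (1 - a + 3 * a ^ 2 - t) - 1 = 2 * a ^ 2 + 3 * a ^ 3 - (1 + a) * t by ring,
    show 2 * (1 + 2 * a) * (1 - a + 3 * a ^ 2 - t) ^ 2 - 3 * (1 + a) * (1 - a + 3 * a ^ 2 - t) + 1
      = 7 * a ^ 3 - 6 * a ^ 4 + 36 * a ^ 5 - (1 + a + 4 * a ^ 2 + 24 * a ^ 3) * t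
        + (2 + 4 * a) * t ^ 2 by ring]
  have ha2 : a ^ 2 ≤ 1 / 256 := by nlinarith
  have ha3 : 0 < a ^ 3 := by positivity
  have hc : 0 ≤ 1 + a + 4 * a ^ 2 + 24 * a ^ 3 := by positivity
  have hD : a ^ 2 ≤ 2 * a ^ 2 + 3 * a ^ 3 - (1 + a) * t := by
    nlinarith [mul_le_mul_of_nonneg_left ht' (by linarith : (0:ℝ) ≤ 1 + a)]
  have ht2 : (2 + 4 * a) * t ^ 2 ≤ a ^ 3 := by
    have : t ^ 2 ≤ 225 * a ^ 6 := by nlinarith [mul_le_mul ht' ht' ht (by positivity)]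
    nlinarith [mul_le_mul this (by linarith : 2 + 4 * a ≤ 3) (by linarith) (by positivity),
      mul_le_mul_of_nonneg_left (by nlinarith : a ^ 3 ≤ 1 / 4096) ha3.le]
  have hN : |7 * a ^ 3 - 6 * a ^ 4 + 36 * a ^ 5 - (1 + a + 4 * a ^ 2 + 24 * a ^ 3) * t
      + (2 + 4 * a) * t ^ 2| ≤ 10 * a ^ 3 := by
    rw [abs_le]
    constructor
    · nlinarith [mul_le_mul_of_nonneg_left ht' hc,
        mul_nonneg (sq_nonneg t) (by linarith : 0 ≤ 2 + 4 * a)]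
    · nlinarith [mul_nonneg hc ht, mul_le_mul_of_nonneg_left ha2 ha3.le, pow_pos ha 4]
  have hDpos : 0 < 2 * a ^ 2 + 3 * a ^ 3 - (1 + a) * t := lt_of_lt_of_le (by positivity) hD
  rw [abs_div, abs_of_pos hDpos, div_le_iff₀ hDpos]
  nlinarith

/-- `√(2/π) * gaussTail x = P(|Z| > x)` for a standard normal `Z`. -/
noncomputable def halfNormalCumHazard (x : ℝ) : ℝ := -log (√(2 / π) * gaussTail x)

lemma hasDerivAt_halfNormalCumHazard (x : ℝ) :
    HasDerivAt halfNormalCumHazard (millsRatio x)⁻¹ x := by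
  have hpos : 0 < √(2 / π) * gaussTail x := mul_pos (sqrt_pos.2 (by positivity)) (gaussTail_pos x)
  refine (((hasDerivAt_gaussTail x).const_mul (√(2 / π))).log hpos.ne').neg.congr_deriv ?_
  rw [millsRatio, inv_div]
  field_simp

lemma strictMono_halfNormalCumHazard : StrictMono halfNormalCumHazard :=
  strictMono_of_hasDerivAt_pos hasDerivAt_halfNormalCumHazard fun x => inv_pos.2 (millsRatio_pos x)

lemma halfNormalCumHazard_zero : halfNormalCumHazard 0 = 0 := by
  simp [halfNormalCumHazard, gaussTail]

lemma halfNormalCumHazard_sqrt {y v : ℝ} (hy : 0 ≤ y) (h : chi1CDF y = 1 - exp (-v)) :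
    halfNormalCumHazard √y = v := by
  rw [chi1CDF_eq_integral_exp hy] at h
  rw [halfNormalCumHazard, gaussTail, mul_sub, sqrt_two_div_pi_mul_sqrt_pi_div_two, h,
    sub_sub_cancel, log_exp, neg_neg]

lemma hasDerivAt_of_halfNormalCumHazard_eq {g : ℝ → ℝ}
    (hg : ∀ v ∈ Ioi 0, halfNormalCumHazard (g v) = v) {v : ℝ} (hv : 0 < v) :
    HasDerivAt g (millsRatio (g v)) v := by
  have hev : ∀ᶠ w in 𝓝 v, halfNormalCumHazard (g w) = w :=
    eventually_of_mem (Ioi_mem_nhds hv) hg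
  have hcont : ContinuousAt g v :=
    strictMono_halfNormalCumHazard.tendsto_nhds_of_eventually_apply_eq (by rw [hg v hv]) hev
  simpa using HasDerivAt.of_local_left_inverse hcont (hasDerivAt_halfNormalCumHazard (g v))
    (inv_ne_zero (millsRatio_pos _).ne') hev

lemma tendsto_nhdsGT_zero_of_halfNormalCumHazard_eq {g : ℝ → ℝ}
    (hg : ∀ v ∈ Ioi 0, halfNormalCumHazard (g v) = v) : Tendsto g (𝓝[>] 0) (𝓝 0) :=
  strictMono_halfNormalCumHazard.tendsto_nhds_of_eventually_apply_eq
    (by rw [halfNormalCumHazard_zero]; exact nhdsWithin_le_nhds)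
    (eventually_mem_nhdsWithin.mono hg)

lemma tendsto_atTop_of_halfNormalCumHazard_eq {g : ℝ → ℝ}
    (hg : ∀ v ∈ Ioi 0, halfNormalCumHazard (g v) = v) : Tendsto g atTop atTop :=
  strictMono_halfNormalCumHazard.tendsto_atTop_of_eventually_apply_eq
    ((eventually_gt_atTop 0).mono hg)

lemma hasDerivAt_two_mul_mul_millsRatio (x : ℝ) :
    HasDerivAt (fun x => 2 * x * millsRatio x) (2 * ((1 + x ^ 2) * millsRatio x - x)) x := by
  refine (((hasDerivAt_id x).const_mul 2).mul (hasDerivAt_millsRatio x)).congr_deriv ?_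
  simp only [id]; ring

/-- `H̃'' = tildeH2 ∘ √H̃`. -/
noncomputable def tildeH2 (x : ℝ) : ℝ := 2 * ((1 + x ^ 2) * millsRatio x - x) * millsRatio x

/-- `H̃''' = tildeH3 ∘ √H̃`. -/
noncomputable def tildeH3 (x : ℝ) : ℝ :=
  2 * (2 * x * (x ^ 2 + 2) * millsRatio x ^ 2 - 3 * (x ^ 2 + 1) * millsRatio x + x) * millsRatio x

lemma hasDerivAt_tildeH2 (x : ℝ) :
    HasDerivAt tildeH2
      (2 * (2 * x * (x ^ 2 + 2) * millsRatio x ^ 2 - 3 * (x ^ 2 + 1) * millsRatio x + x)) x := by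
  have hψ := hasDerivAt_millsRatio x
  refine (((((hasDerivAt_id x).fun_pow 2).const_add 1).fun_mul hψ |>.fun_sub (hasDerivAt_id x)
    |>.const_mul 2).fun_mul hψ).congr_deriv ?_
  simp only [id]; ring

lemma eqOn_tildeH2_comp_and_tildeH3_comp {H g : ℝ → ℝ} (hH : EqOn H (fun v => g v ^ 2) (Ioi 0))
    (hg : ∀ v ∈ Ioi 0, HasDerivAt g (millsRatio (g v)) v) :
    EqOn (deriv (deriv H)) (tildeH2 ∘ g) (Ioi 0) ∧
      EqOn (deriv (deriv (deriv H))) (tildeH3 ∘ g) (Ioi 0) := by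
  have h1 : EqOn (deriv H) ((fun x => 2 * x * millsRatio x) ∘ g) (Ioi 0) :=
    eqOn_deriv_of_eqOn_comp (g := g) isOpen_Ioi hg (φ := fun x => x ^ 2) (φ' := fun x => 2 * x)
      (fun x => (hasDerivAt_pow 2 x).congr_deriv (by ring)) hH
  have h2 : EqOn (deriv (deriv H)) (tildeH2 ∘ g) (Ioi 0) :=
    eqOn_deriv_of_eqOn_comp (g := g) isOpen_Ioi hg hasDerivAt_two_mul_mul_millsRatio h1
  exact ⟨h2, eqOn_deriv_of_eqOn_comp (g := g) isOpen_Ioi hg hasDerivAt_tildeH2 h2⟩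

lemma continuousAt_tildeH3_div_tildeH2_zero :
    ContinuousAt (fun x => tildeH3 x / tildeH2 x) 0 := by
  have hψ := continuous_millsRatio
  refine ContinuousAt.div (by unfold tildeH3; fun_prop) (by unfold tildeH2; fun_prop) ?_
  simp [tildeH2, (millsRatio_pos 0).ne']

lemma tildeH3_div_tildeH2_eq {x : ℝ} (hx : x ≠ 0) :
    tildeH3 x / tildeH2 x =
      (2 * (1 + 2 * x⁻¹ ^ 2) * (x * millsRatio x) ^ 2 - 3 * (1 + x⁻¹ ^ 2) * (x * millsRatio x) + 1)
        / ((1 + x⁻¹ ^ 2) * (x * millsRatio x) - 1) := by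
  have hN : 2 * (1 + 2 * x⁻¹ ^ 2) * (x * millsRatio x) ^ 2
      - 3 * (1 + x⁻¹ ^ 2) * (x * millsRatio x) + 1
      = (2 * x * (x ^ 2 + 2) * millsRatio x ^ 2 - 3 * (x ^ 2 + 1) * millsRatio x + x) / x := by
    field_simp
  have hD : (1 + x⁻¹ ^ 2) * (x * millsRatio x) - 1 = ((1 + x ^ 2) * millsRatio x - x) / x := by
    field_simp; ring
  rw [hN, hD, div_div_div_cancel_right₀ hx, tildeH3, tildeH2,
    mul_div_mul_right _ _ (millsRatio_pos x).ne', mul_div_mul_left _ _ two_ne_zero]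

lemma abs_tildeH3_div_tildeH2_le {x : ℝ} (hx : 4 ≤ x) :
    |tildeH3 x / tildeH2 x| ≤ 10 * x⁻¹ ^ 2 := by
  have hx0 : 0 < x := by linarith
  rw [tildeH3_div_tildeH2_eq hx0.ne']
  refine abs_div_le_of_mills_bounds (by positivity) ?_ ?_ ?_
  · rw [inv_pow]; exact inv_le_of_inv_le₀ (by norm_num) (by nlinarith)
  · linarith [mul_le_mul_of_nonneg_left (millsApprox_le_millsRatio hx0) hx0.le,
      mul_millsApprox 15 hx0.ne']
  · linarith [mul_le_mul_of_nonneg_left (millsRatio_le_millsApprox hx0) hx0.le,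
      mul_millsApprox 0 hx0.ne']

/-- With `H̃ = F⁻¹ ∘ G` (`F` the χ²₁ CDF, `G` standard exponential CDF),
`(H̃'''(v)/H̃''(v))·(1 - e^{-v}) → 0` as `v → 0⁺`, and `H̃'''(v)/H̃''(v) → 0` as `v → ∞`. -/
theorem tildeH_third_deriv_ratio (H : ℝ → ℝ)
    (hH : ∀ v ∈ Set.Ioi (0:ℝ), 0 < H v ∧ chi1CDF (H v) = 1 - Real.exp (-v)) :
    Tendsto (fun v => deriv (deriv (deriv H)) v / deriv (deriv H) v * (1 - Real.exp (-v)))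
      (nhdsWithin 0 (Set.Ioi 0)) (nhds 0) ∧
    Tendsto (fun v => deriv (deriv (deriv H)) v / deriv (deriv H) v) atTop (nhds 0) := by
  set g : ℝ → ℝ := fun v => √(H v)
  have hg : ∀ v ∈ Ioi 0, halfNormalCumHazard (g v) = v := fun v hv =>
    halfNormalCumHazard_sqrt (hH v hv).1.le (hH v hv).2
  obtain ⟨h2, h3⟩ := eqOn_tildeH2_comp_and_tildeH3_comp (g := g)
    (fun v hv => (sq_sqrt (hH v hv).1.le).symm)
    (fun v hv => hasDerivAt_of_halfNormalCumHazard_eq hg hv)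
  have hratio : ∀ v ∈ Ioi 0,
      deriv (deriv (deriv H)) v / deriv (deriv H) v = tildeH3 (g v) / tildeH2 (g v) :=
    fun v hv => by rw [h2 hv, h3 hv, Function.comp_apply, Function.comp_apply]
  constructor
  · have hexp : Tendsto (fun v => 1 - exp (-v)) (𝓝[>] 0) (𝓝 0) :=
      (Continuous.tendsto' (by fun_prop) 0 0 (by simp)).mono_left nhdsWithin_le_nhds
    simpa using ((continuousAt_tildeH3_div_tildeH2_zero.tendsto.comp
      (tendsto_nhdsGT_zero_of_halfNormalCumHazard_eq hg)).mul hexp).congr'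
      (eventuallyEq_of_mem self_mem_nhdsWithin fun v hv => by rw [hratio v hv]; rfl)
  · have hgtop := tendsto_atTop_of_halfNormalCumHazard_eq hg
    refine squeeze_zero_norm' ?_
      (by simpa using ((tendsto_inv_atTop_zero.comp hgtop).pow 2).const_mul 10)
    filter_upwards [eventually_gt_atTop 0, hgtop.eventually_ge_atTop 4] with v hv hv4
    rw [hratio v hv, norm_eq_abs, ← inv_pow]
    exact abs_tildeH3_div_tildeH2_le hv4
end
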